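/- Let d, k ≥ 1, B > 0, ε ∈ (0,1), let U be a positive integer, let 𝒞 be a finite partition of ℝ^d into Borel sets, and let S be a finite tuple of points of ℝ^d. Suppose that for every A ∈ 𝒞 and every real polynomial p in d variables of degree at most k, (1/U)·Σ_{x∈S} p(x)²·1_A(x) ≤ E_{x∼N(0,I_d)}[p(x)²·1_A(x)] + (ε²/(|𝒞|·B²·(d+1)^k))·‖p‖²_coef, where the sum over x ∈ S counts entries with multiplicity and ‖p‖_coef denotes the Euclidean norm of the coefficient vector of p in the monomial basis. Then for every measurable function f : ℝ^d → {0,1} that has (ν, B)-sandwiching degree at most k in L2 norm under N(0,I_d) with respect to 𝒞, one has √((1/U)·Σ_{x∈S} f(x)) ≤ √(E_{x∼N(0,I_d)}[f(x)]) + √ν + ε. -/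

import Mathlib

open MeasureTheory ProbabilityTheory Real
open scoped ENNReal

noncomputable section

/-- The standard Gaussian measure `N(0, I_d)` on `ℝ^d`. -/
def stdGaussian (d : ℕ) : Measure (Fin d → ℝ) := Measure.pi fun _ => gaussianReal 0 1

/-- `f` has `(ν, B)`-sandwiching degree at most `k` in `L2` norm under `N(0, I_d)` with
respect to the partition `𝒞`: there are, for each `A ∈ 𝒞`, polynomials `p_down^A, p_up^A`
of degree at most `k` with coefficients bounded by `B`, such that
`Σ_A p_down^A·1_A ≤ f ≤ Σ_A p_up^A·1_A` pointwise and
`E_{N(0,I_d)}[(Σ_A (p_up^A - p_down^A)·1_A)²] ≤ ν`. -/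
def SandwichL2 {d : ℕ} (𝒞 : Finset (Set (Fin d → ℝ))) (f : (Fin d → ℝ) → ℝ)
    (k : ℕ) (ν B : ℝ) : Prop :=
  ∃ pd pu : Set (Fin d → ℝ) → MvPolynomial (Fin d) ℝ,
    (∀ A ∈ 𝒞, (pd A).totalDegree ≤ k ∧ (pu A).totalDegree ≤ k ∧
      (∀ m, |(pd A).coeff m| ≤ B) ∧ (∀ m, |(pu A).coeff m| ≤ B)) ∧
    (∀ x, (∑ A ∈ 𝒞, Set.indicator A (fun y => MvPolynomial.eval y (pd A)) x) ≤ f x ∧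
      f x ≤ ∑ A ∈ 𝒞, Set.indicator A (fun y => MvPolynomial.eval y (pu A)) x) ∧
    (∫ x, (∑ A ∈ 𝒞, Set.indicator A
        (fun y => MvPolynomial.eval y (pu A) - MvPolynomial.eval y (pd A)) x) ^ 2
      ∂(stdGaussian d)) ≤ ν

/-!
Let `g = Σ_A 1_A p_up^A` and `l = Σ_A 1_A p_down^A`. As `f` is `{0,1}`-valued and `f ≤ g`, also
`f ≤ g²`, and on a partition `g² = Σ_A 1_A (p_up^A)²`. Applying the moment hypothesis to `p_up^A`
in each cell bounds the sample mean of `f` by `E[g²] + ε²`: the error terms add up to at most `ε²`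
because a polynomial of degree at most `k` in `d` variables has at most `(d+1)^k` monomials, so
`‖p_up^A‖²_coef ≤ B²(d+1)^k`. On the Gaussian side, Minkowski's inequality gives
`‖g‖₂ ≤ ‖f‖₂ + ‖g - f‖₂` with `‖f‖₂ = √E[f]`, and `0 ≤ g - f ≤ g - l` bounds `‖g - f‖₂` by `√ν`.
-/

open Finset MvPolynomial

section L2

variable {α : Type*} [MeasurableSpace α] {μ : Measure α}

lemma sqrt_integral_sq_eq_toReal_eLpNorm {u : α → ℝ} (hu : MemLp u 2 μ) :
    √(∫ x, u x ^ 2 ∂μ) = (eLpNorm u 2 μ).toReal := by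
  rw [hu.eLpNorm_eq_integral_rpow_norm two_ne_zero ENNReal.ofNat_ne_top,
    ENNReal.toReal_ofReal (by positivity), sqrt_eq_rpow]
  norm_num [Real.norm_eq_abs]

lemma sqrt_integral_add_sq_le {u v : α → ℝ} (hu : MemLp u 2 μ) (hv : MemLp v 2 μ) :
    √(∫ x, (u x + v x) ^ 2 ∂μ) ≤ √(∫ x, u x ^ 2 ∂μ) + √(∫ x, v x ^ 2 ∂μ) := by
  rw [sqrt_integral_sq_eq_toReal_eLpNorm hu, sqrt_integral_sq_eq_toReal_eLpNorm hv,
    sqrt_integral_sq_eq_toReal_eLpNorm (u := fun x => u x + v x) (hu.add hv),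
    ← ENNReal.toReal_add hu.eLpNorm_ne_top hv.eLpNorm_ne_top]
  exact ENNReal.toReal_mono (by finiteness)
    (eLpNorm_add_le hu.aestronglyMeasurable hv.aestronglyMeasurable one_le_two)

end L2

lemma MvPolynomial.card_support_le_of_totalDegree_le {σ R : Type*} [Fintype σ] [CommSemiring R]
    {p : MvPolynomial σ R} {k : ℕ} (hp : p.totalDegree ≤ k) :
    #p.support ≤ (Fintype.card σ + 1) ^ k := by
  classical
  -- A monomial of degree at most `k` is a multiset of at most `k` variables; listing it and
  -- padding with `none` encodes it injectively as a word of length `k` over `Option σ`.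
  let code : (σ →₀ ℕ) → Fin k → Option σ := fun m j => (Finsupp.toMultiset m).toList[(j : ℕ)]?
  have hlen : ∀ m ∈ p.support, (Finsupp.toMultiset m).toList.length ≤ k := by
    intro m hm
    rw [Multiset.length_toList, Finsupp.card_toMultiset]
    exact (le_totalDegree hm).trans hp
  have hinj : Set.InjOn code p.support := by
    intro m hm m' hm' h
    rw [← Finsupp.toMultiset_toFinsupp m, ← Finsupp.toMultiset_toFinsupp m']
    congr 1
    rw [← Multiset.coe_toList (Finsupp.toMultiset m), ← Multiset.coe_toList (Finsupp.toMultiset m')]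
    congr 1
    apply List.ext_getElem?
    intro j
    by_cases hj : j < k
    · exact congrFun h ⟨j, hj⟩
    · have := hlen m hm; have := hlen m' hm'
      rw [List.getElem?_eq_none (by omega), List.getElem?_eq_none (by omega)]
  calc #p.support ≤ #(univ : Finset (Fin k → Option σ)) :=
        card_le_card_of_injOn code (fun _ _ => mem_univ _) hinj
    _ = (Fintype.card σ + 1) ^ k := by simp

lemma MvPolynomial.sum_sq_coeff_le {σ : Type*} [Fintype σ] {p : MvPolynomial σ ℝ} {k : ℕ}
    (hp : p.totalDegree ≤ k) {B : ℝ} (hB : ∀ m, |p.coeff m| ≤ B) :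
    ∑ m ∈ p.support, p.coeff m ^ 2 ≤ B ^ 2 * ((Fintype.card σ : ℝ) + 1) ^ k := by
  calc ∑ m ∈ p.support, p.coeff m ^ 2 ≤ ∑ _m ∈ p.support, B ^ 2 :=
        sum_le_sum fun m _ => sq_le_sq' (abs_le.mp (hB m)).1 (abs_le.mp (hB m)).2
    _ = #p.support * B ^ 2 := by rw [sum_const, nsmul_eq_mul]
    _ ≤ B ^ 2 * ((Fintype.card σ : ℝ) + 1) ^ k := by
        rw [mul_comm]
        gcongr
        exact_mod_cast card_support_le_of_totalDegree_le hp

lemma MvPolynomial.integrable_eval_pi {σ : Type*} [Fintype σ] {μ : σ → Measure ℝ}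
    [∀ i, SigmaFinite (μ i)] (hμ : ∀ i (n : ℕ), Integrable (fun t => t ^ n) (μ i))
    (p : MvPolynomial σ ℝ) : Integrable (fun x => eval x p) (Measure.pi μ) := by
  simp_rw [eval_eq']
  exact integrable_finsetSum _ fun m _ =>
    (Integrable.fintype_prod fun i => hμ i (m i)).const_mul _

lemma integrable_pow_gaussianReal (m : ℝ) (v : NNReal) (n : ℕ) :
    Integrable (fun t => t ^ n) (gaussianReal m v) :=
  integrable_pow_of_integrable_exp_mul one_ne_zero (integrable_exp_mul_gaussianReal 1)
    (integrable_exp_mul_gaussianReal (-1)) n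

lemma integrable_eval_stdGaussian {d : ℕ} (p : MvPolynomial (Fin d) ℝ) :
    Integrable (fun x => eval x p) (stdGaussian d) :=
  integrable_eval_pi (fun _ => integrable_pow_gaussianReal 0 1) p

lemma memLp_eval_stdGaussian {d : ℕ} (p : MvPolynomial (Fin d) ℝ) :
    MemLp (fun x => eval x p) 2 (stdGaussian d) :=
  (memLp_two_iff_integrable_sq (continuous_eval p).aestronglyMeasurable).mpr <| by
    convert integrable_eval_stdGaussian (p ^ 2) using 2; simp

lemma sq_sum_indicator_of_pairwiseDisjoint {ι α : Type*} {s : Finset ι} {t : ι → Set α}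
    (ht : (s : Set ι).PairwiseDisjoint t) (φ : ι → α → ℝ) (x : α) :
    (∑ i ∈ s, (t i).indicator (φ i) x) ^ 2 = ∑ i ∈ s, (t i).indicator (fun y => φ i y ^ 2) x := by
  by_cases hx : ∃ i ∈ s, x ∈ t i
  · obtain ⟨i, hi, hxi⟩ := hx
    have hout : ∀ j ∈ s, j ≠ i → x ∉ t j := fun j hj hji hxj =>
      Set.disjoint_left.mp (ht hj hi hji) hxj hxi
    rw [sum_eq_single_of_mem i hi fun j hj hji => Set.indicator_of_notMem (hout j hj hji) _,
      sum_eq_single_of_mem i hi fun j hj hji => Set.indicator_of_notMem (hout j hj hji) _,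
      Set.indicator_of_mem hxi, Set.indicator_of_mem hxi]
  · simp only [not_exists, not_and] at hx
    rw [sum_eq_zero fun i hi => Set.indicator_of_notMem (hx i hi) _,
      sum_eq_zero fun i hi => Set.indicator_of_notMem (hx i hi) _, zero_pow two_ne_zero]

lemma MvPolynomial.sum_div_mul_sum_sq_coeff_le {ι σ : Type*} [Fintype σ] (s : Finset ι)
    {q : ι → MvPolynomial σ ℝ} {k : ℕ} {B : ℝ} (hdeg : ∀ i ∈ s, (q i).totalDegree ≤ k)
    (hB : ∀ i ∈ s, ∀ m, |(q i).coeff m| ≤ B) (c : ℝ) (hc : 0 ≤ c) :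
    ∑ i ∈ s, c / (#s * B ^ 2 * ((Fintype.card σ : ℝ) + 1) ^ k)
      * ∑ m ∈ (q i).support, (q i).coeff m ^ 2 ≤ c := by
  set Y := (#s : ℝ) * B ^ 2 * ((Fintype.card σ : ℝ) + 1) ^ k
  have hY : 0 ≤ Y := by positivity
  calc ∑ i ∈ s, c / Y * ∑ m ∈ (q i).support, (q i).coeff m ^ 2
      ≤ ∑ _i ∈ s, c / Y * (B ^ 2 * ((Fintype.card σ : ℝ) + 1) ^ k) := by
        gcongr with i hi
        exact sum_sq_coeff_le (hdeg i hi) (hB i hi)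
    _ = c / Y * Y := by rw [sum_const, nsmul_eq_mul]; ring
    _ ≤ c := by
        rcases hY.eq_or_lt with h | h
        · simpa [← h] using hc
        · rw [div_mul_cancel₀ _ h.ne']

lemma le_sq_of_le_of_eq_zero_or_one {a b : ℝ} (ha : a = 0 ∨ a = 1) (hab : a ≤ b) : a ≤ b ^ 2 := by
  rcases ha with rfl | rfl <;> nlinarith

lemma sqrt_add_sq_le {a ε : ℝ} (ha : 0 ≤ a) (hε : 0 ≤ ε) : √(a + ε ^ 2) ≤ √a + ε := by
  rw [sqrt_le_left (by positivity)]
  nlinarith [sq_sqrt ha, sqrt_nonneg a]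

section Sandwich

variable {α : Type*} [MeasurableSpace α] {μ : Measure α}

lemma sqrt_integral_sq_le_of_sandwich [IsFiniteMeasure μ] {f l g : α → ℝ}
    (hf01 : ∀ x, f x = 0 ∨ f x = 1) (hfmeas : Measurable f) (hl : MemLp l 2 μ)
    (hg : MemLp g 2 μ) (hlf : ∀ x, l x ≤ f x) (hfg : ∀ x, f x ≤ g x) :
    √(∫ x, g x ^ 2 ∂μ) ≤ √(∫ x, f x ∂μ) + √(∫ x, (g x - l x) ^ 2 ∂μ) := by
  have hf : MemLp f 2 μ := MemLp.of_bound hfmeas.aestronglyMeasurable 1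
    (ae_of_all _ fun x => by rcases hf01 x with h | h <;> simp [h])
  have hfsq : ∀ x, f x ^ 2 = f x := fun x => by rcases hf01 x with h | h <;> simp [h]
  have hgap : ∫ x, (g x - f x) ^ 2 ∂μ ≤ ∫ x, (g x - l x) ^ 2 ∂μ :=
    integral_mono (hg.sub hf).integrable_sq (hg.sub hl).integrable_sq fun x =>
      pow_le_pow_left₀ (sub_nonneg.mpr (hfg x)) (sub_le_sub_left (hlf x) _) 2
  calc √(∫ x, g x ^ 2 ∂μ) = √(∫ x, (f x + (g x - f x)) ^ 2 ∂μ) := by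
        simp_rw [add_sub_cancel]
    _ ≤ √(∫ x, f x ^ 2 ∂μ) + √(∫ x, (g x - f x) ^ 2 ∂μ) :=
        sqrt_integral_add_sq_le hf (hg.sub hf)
    _ ≤ √(∫ x, f x ∂μ) + √(∫ x, (g x - l x) ^ 2 ∂μ) := by
        simp_rw [hfsq]
        gcongr

lemma weighted_sum_sq_sum_indicator_le {ι κ : Type*} [Fintype κ] {s : Finset ι}
    {t : ι → Set α} (ht : (s : Set ι).PairwiseDisjoint t) (S : κ → α) (w : ℝ)
    (φ : ι → α → ℝ) (c : ι → ℝ)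
    (hint : ∀ i ∈ s, Integrable ((t i).indicator fun y => φ i y ^ 2) μ)
    (hcell : ∀ i ∈ s, w * ∑ n, (t i).indicator (fun y => φ i y ^ 2) (S n)
      ≤ (∫ x, (t i).indicator (fun y => φ i y ^ 2) x ∂μ) + c i) :
    w * ∑ n, (∑ i ∈ s, (t i).indicator (φ i) (S n)) ^ 2
      ≤ (∫ x, (∑ i ∈ s, (t i).indicator (φ i) x) ^ 2 ∂μ) + ∑ i ∈ s, c i := by
  simp_rw [sq_sum_indicator_of_pairwiseDisjoint ht]
  rw [integral_finsetSum _ hint, sum_comm, mul_sum, ← sum_add_distrib]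
  exact sum_le_sum hcell

end Sandwich

instance isProbabilityMeasure_stdGaussian (d : ℕ) : IsProbabilityMeasure (stdGaussian d) :=
  inferInstanceAs (IsProbabilityMeasure (Measure.pi _))

theorem sandwiching_L2_implies_fooling_general
    {d k : ℕ} (B ε ν : ℝ) (hε : ε ∈ Set.Ioo (0:ℝ) 1)
    (U : ℕ)
    (𝒞 : Finset (Set (Fin d → ℝ)))
    (hmeas : ∀ A ∈ 𝒞, MeasurableSet A)
    (hdisj : ∀ A ∈ 𝒞, ∀ A' ∈ 𝒞, A ≠ A' → Disjoint A A')
    {N : ℕ} (S : Fin N → (Fin d → ℝ))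
    (hmom : ∀ A ∈ 𝒞, ∀ p : MvPolynomial (Fin d) ℝ, p.totalDegree ≤ k →
      (1 / (U : ℝ)) * ∑ i, Set.indicator A (fun y => (MvPolynomial.eval y p) ^ 2) (S i)
        ≤ (∫ x, Set.indicator A (fun y => (MvPolynomial.eval y p) ^ 2) x ∂(stdGaussian d))
          + (ε ^ 2 / ((𝒞.card : ℝ) * B ^ 2 * ((d : ℝ) + 1) ^ k))
            * ∑ m ∈ p.support, (p.coeff m) ^ 2)
    (f : (Fin d → ℝ) → ℝ) (hf01 : ∀ x, f x = 0 ∨ f x = 1) (hfmeas : Measurable f)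
    (hsand : SandwichL2 𝒞 f k ν B) :
    Real.sqrt ((1 / (U : ℝ)) * ∑ i, f (S i))
      ≤ Real.sqrt (∫ x, f x ∂(stdGaussian d)) + Real.sqrt ν + ε := by
  obtain ⟨pd, pu, hpoly, hsandwich, hν⟩ := hsand
  have hpart : (𝒞 : Set (Set (Fin d → ℝ))).PairwiseDisjoint id :=
    fun A hA A' hA' h => hdisj A hA A' hA' h
  have hmemLp (q : Set (Fin d → ℝ) → MvPolynomial (Fin d) ℝ) :
      MemLp (fun x => ∑ A ∈ 𝒞, A.indicator (fun y => eval y (q A)) x) 2 (stdGaussian d) :=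
    memLp_finsetSum _ fun A hA => (memLp_eval_stdGaussian (q A)).indicator (hmeas A hA)
  set g := fun x => ∑ A ∈ 𝒞, A.indicator (fun y => eval y (pu A)) x
  set l := fun x => ∑ A ∈ 𝒞, A.indicator (fun y => eval y (pd A)) x
  set δ := ε ^ 2 / ((𝒞.card : ℝ) * B ^ 2 * ((d : ℝ) + 1) ^ k)
  have hsample : (1 / (U : ℝ)) * ∑ i, f (S i) ≤ (∫ x, g x ^ 2 ∂stdGaussian d) + ε ^ 2 :=
    calc (1 / (U : ℝ)) * ∑ i, f (S i) ≤ (1 / (U : ℝ)) * ∑ i, g (S i) ^ 2 := by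
          gcongr with i
          exact le_sq_of_le_of_eq_zero_or_one (hf01 (S i)) (hsandwich (S i)).2
      _ ≤ (∫ x, g x ^ 2 ∂stdGaussian d) + ∑ A ∈ 𝒞, δ * ∑ m ∈ (pu A).support, (pu A).coeff m ^ 2 :=
          weighted_sum_sq_sum_indicator_le hpart S _ _ _
            (fun A hA => ((memLp_eval_stdGaussian (pu A)).integrable_sq).indicator (hmeas A hA))
            fun A hA => hmom A hA (pu A) (hpoly A hA).2.1
      _ ≤ (∫ x, g x ^ 2 ∂stdGaussian d) + ε ^ 2 := by
          gcongr
          simpa using sum_div_mul_sum_sq_coeff_le 𝒞 (fun A hA => (hpoly A hA).2.1)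
            (fun A hA => (hpoly A hA).2.2.2) (ε ^ 2) (sq_nonneg ε)
  have hgap : ∫ x, (g x - l x) ^ 2 ∂stdGaussian d ≤ ν := by
    convert hν using 4 with x
    simp only [g, l, Set.indicator_sub, sum_sub_distrib]
  calc √((1 / (U : ℝ)) * ∑ i, f (S i)) ≤ √((∫ x, g x ^ 2 ∂stdGaussian d) + ε ^ 2) :=
        sqrt_le_sqrt hsample
    _ ≤ √(∫ x, g x ^ 2 ∂stdGaussian d) + ε := sqrt_add_sq_le (by positivity) hε.1.le
    _ ≤ √(∫ x, f x ∂stdGaussian d) + √ν + ε := by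
        grw [sqrt_integral_sq_le_of_sandwich hf01 hfmeas (hmemLp pd) (hmemLp pu)
          (fun x => (hsandwich x).1) (fun x => (hsandwich x).2), hgap]

/-- If the cellwise second moments of all polynomials of degree at most `k` on the sample
are spectrally dominated by the corresponding Gaussian moments (up to
`(ε²/(|𝒞|·B²·(d+1)^k))·‖p‖²_coef`), then for every `{0,1}`-valued function `f` with
`(ν, B)`-sandwiching degree at most `k` in `L2` under `N(0, I_d)` w.r.t. `𝒞`,
`√((1/U)·Σ_{x∈S} f(x)) ≤ √(E_{N(0,I_d)}[f]) + √ν + ε`. -/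
theorem sandwiching_L2_implies_fooling
    {d k : ℕ} (hd : 1 ≤ d) (hk : 1 ≤ k) (B ε ν : ℝ) (hB : 0 < B) (hε : ε ∈ Set.Ioo (0:ℝ) 1)
    (U : ℕ) (hU : 0 < U)
    (𝒞 : Finset (Set (Fin d → ℝ)))
    (hmeas : ∀ A ∈ 𝒞, MeasurableSet A)
    (hdisj : ∀ A ∈ 𝒞, ∀ A' ∈ 𝒞, A ≠ A' → Disjoint A A')
    (hcover : ⋃₀ (𝒞 : Set (Set (Fin d → ℝ))) = Set.univ)
    {N : ℕ} (S : Fin N → (Fin d → ℝ))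
    (hmom : ∀ A ∈ 𝒞, ∀ p : MvPolynomial (Fin d) ℝ, p.totalDegree ≤ k →
      (1 / (U : ℝ)) * ∑ i, Set.indicator A (fun y => (MvPolynomial.eval y p) ^ 2) (S i)
        ≤ (∫ x, Set.indicator A (fun y => (MvPolynomial.eval y p) ^ 2) x ∂(stdGaussian d))
          + (ε ^ 2 / ((𝒞.card : ℝ) * B ^ 2 * ((d : ℝ) + 1) ^ k))
            * ∑ m ∈ p.support, (p.coeff m) ^ 2)
    (f : (Fin d → ℝ) → ℝ) (hf01 : ∀ x, f x = 0 ∨ f x = 1) (hfmeas : Measurable f)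
    (hsand : SandwichL2 𝒞 f k ν B) :
    Real.sqrt ((1 / (U : ℝ)) * ∑ i, f (S i))
      ≤ Real.sqrt (∫ x, f x ∂(stdGaussian d)) + Real.sqrt ν + ε :=
  sandwiching_L2_implies_fooling_general B ε ν hε U 𝒞 hmeas hdisj S hmom f hf01 hfmeas hsand

end
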